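/- If α₁ = 0 (equivalently 2α₂ + α₃ = 1 with the normalization 2α₁ + 2α₂ + α₃ = 1), then the ideal generated by f₃⁽¹⁾ = y − x² − w − t and f₃⁽²⁾ = x + z is invariant under the flow of the system dx/dt = −2x² + 4y − 3w − 2t, dy/dt = 4xy + 2α₂, dz/dt = z² + 2w − 3y + t, dw/dt = −2zw − α₃: the derivatives along the vector field of f₃⁽¹⁾ and f₃⁽²⁾ (where d/dt also differentiates the explicit t in f₃⁽¹⁾) lie in the ideal (f₃⁽¹⁾, f₃⁽²⁾) of ℂ[t][x,y,z,w]. -/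
import Mathlib

open MvPolynomial

/-- Variables: X 0 = x, X 1 = y, X 2 = z, X 3 = w, X 4 = t. -/
noncomputable def f31 : MvPolynomial (Fin 5) ℂ := X 1 - X 0 ^ 2 - X 3 - X 4

noncomputable def f32 : MvPolynomial (Fin 5) ℂ := X 0 + X 2

/-- Total derivative of f₃⁽¹⁾ along the flow: dy/dt − 2x·dx/dt − dw/dt − 1. -/
noncomputable def Df31 (α₂ α₃ : ℂ) : MvPolynomial (Fin 5) ℂ :=
  (4 * X 0 * X 1 + 2 * C α₂)
    - 2 * X 0 * (-2 * X 0 ^ 2 + 4 * X 1 - 3 * X 3 - 2 * X 4)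
    - (-2 * X 2 * X 3 - C α₃) - 1

/-- Total derivative of f₃⁽²⁾ along the flow: dx/dt + dz/dt. -/
noncomputable def Df32 (α₂ α₃ : ℂ) : MvPolynomial (Fin 5) ℂ :=
  (-2 * X 0 ^ 2 + 4 * X 1 - 3 * X 3 - 2 * X 4)
    + (X 2 ^ 2 + 2 * X 3 - 3 * X 1 + X 4)

/-- if α₁ = 0 (with 2α₁ + 2α₂ + α₃ = 1), the ideal
(f₃⁽¹⁾, f₃⁽²⁾) is invariant under the flow. -/
theorem invariant_cycle_codim_two (α₁ α₂ α₃ : ℂ)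
    (hrel : 2 * α₁ + 2 * α₂ + α₃ = 1) (h1 : α₁ = 0) :
    Df31 α₂ α₃ ∈ Ideal.span ({f31, f32} : Set (MvPolynomial (Fin 5) ℂ)) ∧
    Df32 α₂ α₃ ∈ Ideal.span ({f31, f32} : Set (MvPolynomial (Fin 5) ℂ)) := by
  subst h1
  have h3 : α₃ = 1 - 2 * α₂ := by linear_combination hrel
  subst h3
  constructor
  · rw [Ideal.mem_span_pair]
    refine ⟨-4 * X 0, 2 * X 3, ?_⟩
    simp only [Df31, f31, f32, map_sub, map_one, map_mul, map_ofNat]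
    ring
  · rw [Ideal.mem_span_pair]
    refine ⟨1, X 2 - X 0, ?_⟩
    simp only [Df32, f31, f32]
    ring
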